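/- There exists a constant C > 0 depending only on d such that for every probability measure ℙ as in the setting, every f : Ω → ℝ in L²(ℙ) with 𝒩(f) < ∞, and every t > 0: 𝔼[(exp(tL°) f)²] ≤ C · 𝒩(f) / t^{d/2}. -/

import Mathlib

/-! Since `L = ∑_{|z|=1} (U_z - 1)` for the translations `U_z`, the contraction semigroup
`exp (t L)` commutes with the box sums `S_n = ∑_{x ∈ B_n} U_x`, so `u(s) = ‖exp (s L) f‖²` keeps
`‖S_n exp (s L) f‖² ≤ 𝒩(f) |B_n|`. Writing `|B_n| g = S_n g + ∑_{x ∈ B_n} (g - U_x g)` and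
bounding `‖g - U_x g‖` along a lattice path from `0` to `x` gives the Nash-type inequality
`(d n² / 2) u' + u ≤ 𝒩(f) / (2n+1)^d` for every `n`. On `[s/2, s]` with `n ≈ √s`, Grönwall
bounds `u(s)` by `C 𝒩(f) s^(-d/2) + exp (-(d + 1)) u(s/2)`, and an induction over dyadic scales
absorbs the second term. -/

open MeasureTheory ENNReal
open scoped ENNReal NNReal BigOperators

namespace RWRC

/-- sites of `ℤ^d` -/
abbrev V (d : ℕ) := Fin d → ℤ

/-- an (unoriented) nearest-neighbour edge of `ℤ^d`, encoded as `(x, i) = {x, x + eᵢ}` -/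
abbrev Edge (d : ℕ) := (Fin d → ℤ) × Fin d

/-- an environment: a conductance attached to every edge -/
abbrev Env (d : ℕ) := Edge d → ℝ

/-- translation of the environment by `x` : `(θ_x ω)_{y,z} = ω_{x+y,x+z}` -/
def theta {d : ℕ} (x : V d) (ω : Env d) : Env d := fun e => ω (x + e.1, e.2)

/-- the unit vector `±eᵢ` encoded by `p = (i, sign)` -/
def dir {d : ℕ} (p : Fin d × Bool) : V d :=
  if p.2 then Pi.single p.1 1 else -Pi.single p.1 1

/-- the edge `{0, dir p}` -/
def edgeOf {d : ℕ} (p : Fin d × Bool) : Edge d :=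
  (if p.2 then (0 : V d) else -Pi.single p.1 1, p.1)

/-- the box `B_n = {-n, …, n}^d` -/
noncomputable def box (d n : ℕ) : Finset (V d) := Fintype.piFinset fun _ => Finset.Icc (-(n : ℤ)) n

/-- `S_n(f)(ω) = ∑_{x ∈ B_n} f(θ_x ω)` -/
noncomputable def Sfun (d n : ℕ) (f : Env d → ℝ) (ω : Env d) : ℝ :=
  ∑ x ∈ box d n, f (theta x ω)

/-- Dirichlet form `ℰ(f,f) = (1/2) ∑_{|z|=1} 𝔼[ω_{0,z} (f(θ_z ω) - f(ω))²]` of the random walk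
among random conductances -/
noncomputable def dirichlet {d : ℕ} (P : Measure (Env d)) (f : Env d → ℝ) : ℝ :=
  (1 / 2) * ∑ p : Fin d × Bool,
    ∫ ω, ω (edgeOf p) * (f (theta (dir p) ω) - f ω) ^ 2 ∂P

/-- Dirichlet form `ℰ°(f,f) = (1/2) ∑_{|z|=1} 𝔼[(f(θ_z ω) - f(ω))²]` of the simple random walk -/
noncomputable def dirichlet0 {d : ℕ} (P : Measure (Env d)) (f : Env d → ℝ) : ℝ :=
  (1 / 2) * ∑ p : Fin d × Bool,
    ∫ ω, (f (theta (dir p) ω) - f ω) ^ 2 ∂P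

open scoped RealInnerProductSpace

section Decay

open Real

theorem le_add_sub_mul_exp_of_deriv_le {u u' : ℝ → ℝ} {a c b K : ℝ} (hK : 0 < K)
    (hac : a ≤ c) (hu : ∀ s, HasDerivAt u (u' s) s) (h : ∀ s ∈ Set.Ico a c, K * u' s + u s ≤ b) :
    u c ≤ b + (u a - b) * exp (-((c - a) / K)) := by
  have := le_gronwallBound_of_liminf_deriv_right_le (f := u) (f' := u') (δ := u a)
    (K := -K⁻¹) (ε := b / K) (fun s _ => (hu s).continuousAt.continuousWithinAt)
    (fun s _ r hr => (hu s).hasDerivWithinAt.liminf_right_slope_le hr) le_rfl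
    (fun s hs => by have := h s hs; field_simp; linarith) c ⟨hac, le_rfl⟩
  rw [gronwallBound_of_K_ne_0 (neg_ne_zero.2 (inv_ne_zero hK.ne'))] at this
  convert this using 1
  field_simp
  ring_nf

theorem le_div_rpow_of_le_add_mul_half {u : ℝ → ℝ} {α q t₀ A : ℝ} (ht₀ : 0 < t₀)
    (hA : 0 ≤ A) (hq : 0 ≤ q) (hq2 : q * 2 ^ α ≤ 1 / 2)
    (hsmall : ∀ s, 0 < s → s ≤ t₀ → u s ≤ A / s ^ α)
    (hhalf : ∀ s, t₀ ≤ s → u s ≤ A / s ^ α + q * u (s / 2)) {t : ℝ} (ht : 0 < t) :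
    u t ≤ 2 * A / t ^ α := by
  suffices ∀ k : ℕ, ∀ s, 0 < s → s ≤ t₀ * 2 ^ k → u s ≤ 2 * A / s ^ α by
    obtain ⟨k, hk⟩ := pow_unbounded_of_one_lt (t / t₀) one_lt_two
    exact this k t ht ((div_le_iff₀' ht₀).1 hk.le)
  intro k
  induction k with
  | zero =>
    intro s hs hst
    refine (hsmall s hs (by simpa using hst)).trans ?_
    gcongr
    linarith
  | succ k ih =>
    intro s hs hst
    rcases le_or_gt s t₀ with hst₀ | hst₀
    · refine (hsmall s hs hst₀).trans ?_
      gcongr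
      linarith
    have hs2 : u (s / 2) ≤ 2 * A * 2 ^ α / s ^ α := by
      have := ih (s / 2) (by positivity) (by rw [pow_succ] at hst; linarith)
      rwa [div_rpow hs.le zero_le_two, div_div_eq_mul_div] at this
    calc u s ≤ A / s ^ α + q * (2 * A * 2 ^ α / s ^ α) := by
          grw [hhalf s hst₀.le, hs2]
      _ = A / s ^ α + (q * 2 ^ α) * (2 * A) / s ^ α := by ring
      _ ≤ A / s ^ α + (1 / 2) * (2 * A) / s ^ α := by gcongr
      _ = 2 * A / s ^ α := by ring

theorem exp_neg_add_one_mul_two_rpow_le (d : ℕ) :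
    exp (-(d + 1)) * 2 ^ ((d : ℝ) / 2) ≤ 1 / 2 := by
  have h2 : (2 : ℝ) ^ ((d : ℝ) / 2) ≤ exp d := calc
    (2 : ℝ) ^ ((d : ℝ) / 2) ≤ 2 ^ (d : ℝ) :=
        rpow_le_rpow_of_exponent_le one_le_two (by linarith [(Nat.cast_nonneg d : (0 : ℝ) ≤ d)])
    _ ≤ exp 1 ^ (d : ℝ) := by gcongr; linarith [exp_one_gt_d9]
    _ = exp d := exp_one_rpow _
  calc exp (-(d + 1)) * 2 ^ ((d : ℝ) / 2) ≤ exp (-(d + 1)) * exp d := by gcongr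
    _ = exp (-1) := by rw [← exp_add]; ring_nf
    _ ≤ 1 / 2 := by rw [exp_neg, inv_le_comm₀ (exp_pos 1) (by norm_num)]; linarith [exp_one_gt_d9]

theorem exists_nat_sq_le_and_rpow_le {x : ℝ} (hx : 1 ≤ x) (d : ℕ) :
    ∃ n : ℕ, 1 ≤ n ∧ (n : ℝ) ^ 2 ≤ x ∧ x ^ ((d : ℝ) / 2) ≤ (2 * n + 1) ^ d := by
  have hsqrt : 1 ≤ √x := one_le_sqrt.2 hx
  refine ⟨⌊√x⌋₊, Nat.le_floor (by simpa using hsqrt), ?_, ?_⟩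
  · calc (⌊√x⌋₊ : ℝ) ^ 2 ≤ √x ^ 2 := by gcongr; exact Nat.floor_le (sqrt_nonneg x)
      _ = x := sq_sqrt (by linarith)
  · calc x ^ ((d : ℝ) / 2) = √x ^ d := by
          rw [sqrt_eq_rpow, ← Real.rpow_natCast, ← rpow_mul (by linarith)]; ring_nf
      _ ≤ (2 * ⌊√x⌋₊ + 1) ^ d := by
          gcongr
          linarith [Nat.lt_floor_add_one √x, (Nat.cast_nonneg _ : (0 : ℝ) ≤ ⌊√x⌋₊)]

theorem le_div_rpow_of_nash_ineq {d : ℕ} {a N : ℝ} (ha : 0 < a) {u u' : ℝ → ℝ}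
    (hu : ∀ s, HasDerivAt u (u' s) s) (hu0 : ∀ s, 0 ≤ u s)
    (hnash : ∀ n : ℕ, ∀ s, 0 ≤ s → a * n ^ 2 * u' s + u s ≤ N / (2 * n + 1) ^ d)
    {t : ℝ} (ht : 0 < t) :
    u t ≤ 2 * (2 * (d + 1) * a) ^ ((d : ℝ) / 2) * N / t ^ ((d : ℝ) / 2) := by
  set t₀ : ℝ := 2 * (d + 1) * a
  have ht₀ : 0 < t₀ := by positivity
  have hle : ∀ s, 0 ≤ s → u s ≤ N := fun s hs => by simpa using hnash 0 s hs
  have hN : 0 ≤ N := (hu0 0).trans (hle 0 le_rfl)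
  rw [mul_assoc]
  refine le_div_rpow_of_le_add_mul_half ht₀ (by positivity) (exp_pos _).le
    (exp_neg_add_one_mul_two_rpow_le d) (fun s hs hst => ?_) (fun s hst => ?_) ht
  · rw [le_div_iff₀ (by positivity), mul_comm _ N]
    gcongr
    exact hle s hs.le
  -- Grönwall on `[s/2, s]` at the scale `n ≈ √(s / t₀)`: the decay factor is at most
  -- `exp (-(d + 1))`, and `N / (2n+1)^d` is of order `N s^(-d/2)`.
  obtain ⟨n, hn, hn2, hpow⟩ := exists_nat_sq_le_and_rpow_le ((one_le_div ht₀).2 hst) d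
  have hs : 0 < s := ht₀.trans_le hst
  have hK : 0 < a * n ^ 2 := by positivity
  have hdecay : (d : ℝ) + 1 ≤ (s - s / 2) / (a * n ^ 2) := by
    rw [le_div_iff₀ hK]
    calc ((d : ℝ) + 1) * (a * n ^ 2) ≤ (d + 1) * (a * (s / t₀)) := by gcongr
      _ = s - s / 2 := by field_simp; ring
  have hb : N / (2 * n + 1) ^ d ≤ t₀ ^ ((d : ℝ) / 2) * N / s ^ ((d : ℝ) / 2) := by
    rw [div_le_div_iff₀ (by positivity) (by positivity), mul_comm _ N, mul_assoc]
    gcongr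
    rwa [div_rpow hs.le ht₀.le, div_le_iff₀ (by positivity), mul_comm] at hpow
  have hgron := le_add_sub_mul_exp_of_deriv_le (a := s / 2) (c := s) hK (by linarith) hu
    (fun r hr => hnash n r (by linarith [hr.1]))
  have hrest : (u (s / 2) - N / (2 * n + 1) ^ d) * exp (-((s - s / 2) / (a * n ^ 2)))
      ≤ exp (-(d + 1)) * u (s / 2) := calc
    _ ≤ u (s / 2) * exp (-((s - s / 2) / (a * n ^ 2))) := by
        gcongr
        exact sub_le_self _ (by positivity)
    _ ≤ u (s / 2) * exp (-(d + 1)) := by gcongr; exact hu0 _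
    _ = _ := mul_comm _ _
  linarith

end Decay

section Dissipative

variable {E : Type*} [NormedAddCommGroup E] [InnerProductSpace ℝ E] [CompleteSpace E]

theorem hasDerivAt_norm_sq_exp_smul_apply (A : E →L[ℝ] E) (g : E) (t : ℝ) :
    HasDerivAt (fun s : ℝ => ‖NormedSpace.exp (s • A) g‖ ^ 2)
      (2 * ⟪A (NormedSpace.exp (t • A) g), NormedSpace.exp (t • A) g⟫) t := by
  have hexp : HasDerivAt (fun s : ℝ => NormedSpace.exp (s • A) g)
      (A (NormedSpace.exp (t • A) g)) t := by
    simpa using ((hasDerivAt_exp_smul_const' (𝕂 := ℝ) A t).clm_apply (hasDerivAt_const t g))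
  simpa only [real_inner_comm] using hexp.norm_sq

theorem norm_exp_smul_apply_le {A : E →L[ℝ] E} (hA : ∀ g, ⟪A g, g⟫ ≤ 0) (g : E) {t : ℝ}
    (ht : 0 ≤ t) : ‖NormedSpace.exp (t • A) g‖ ≤ ‖g‖ := by
  have hanti : Antitone fun s : ℝ => ‖NormedSpace.exp (s • A) g‖ ^ 2 :=
    antitone_of_hasDerivAt_nonpos (hasDerivAt_norm_sq_exp_smul_apply A g)
      fun s => mul_nonpos_of_nonneg_of_nonpos zero_le_two (hA _)
  have := hanti ht
  simp only [zero_smul, NormedSpace.exp_zero, one_apply_eq_self] at this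
  exact (pow_le_pow_iff_left₀ (norm_nonneg _) (norm_nonneg _) two_ne_zero).1 this

end Dissipative

section Lattice

variable {d : ℕ}

theorem theta_add (x y : V d) (ω : Env d) : theta (x + y) ω = theta y (theta x ω) := by
  funext e
  simp only [theta, add_assoc]

theorem theta_zero (ω : Env d) : theta 0 ω = ω := by
  funext e
  simp [theta]

theorem card_box (n : ℕ) : (box d n).card = (2 * n + 1) ^ d := by
  simp only [box, Fintype.card_piFinset, Int.card_Icc, Finset.prod_const, Finset.card_univ,
    Fintype.card_fin]
  congr 1
  omega

theorem sum_sq_le_of_mem_box {n : ℕ} {x : V d} (hx : x ∈ box d n) :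
    ∑ i, (x i : ℝ) ^ 2 ≤ d * n ^ 2 := by
  calc ∑ i, (x i : ℝ) ^ 2 ≤ ∑ _i : Fin d, (n : ℝ) ^ 2 := by
        refine Finset.sum_le_sum fun i _ => ?_
        have hi := Finset.mem_Icc.1 (Fintype.mem_piFinset.1 hx i)
        rw [← sq_abs]
        gcongr
        exact_mod_cast abs_le.2 hi
    _ = d * n ^ 2 := by simp

end Lattice

section Translation

variable {d : ℕ} {P : Measure (Env d)} (hθ : ∀ x : V d, MeasurePreserving (theta x) P P)

noncomputable def translate (x : V d) : Lp ℝ 2 P →L[ℝ] Lp ℝ 2 P :=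
  (Lp.compMeasurePreservingₗᵢ ℝ (theta x) (hθ x)).toContinuousLinearMap

theorem coeFn_translate (x : V d) (g : Lp ℝ 2 P) :
    translate hθ x g =ᵐ[P] fun ω => g (theta x ω) :=
  Lp.coeFn_compMeasurePreserving g (hθ x)

theorem norm_translate (x : V d) (g : Lp ℝ 2 P) : ‖translate hθ x g‖ = ‖g‖ :=
  Lp.norm_compMeasurePreserving g (hθ x)

theorem translate_zero : translate hθ 0 = 1 := by
  ext1 g
  refine Lp.ext ((coeFn_translate hθ 0 g).trans (.of_forall fun ω => ?_))
  simp [theta_zero]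

theorem translate_add (x y : V d) :
    translate hθ (x + y) = translate hθ x * translate hθ y := by
  ext1 g
  refine Lp.ext ?_
  filter_upwards [coeFn_translate hθ (x + y) g, coeFn_translate hθ x (translate hθ y g),
    (hθ x).quasiMeasurePreserving.ae_eq_comp (coeFn_translate hθ y g)] with ω h₁ h₂ h₃
  rw [Function.comp_apply, Function.comp_apply] at h₃
  rw [mul_apply_eq_comp, h₁, h₂, h₃, theta_add]

theorem commute_translate (x y : V d) : Commute (translate hθ x) (translate hθ y) := by
  rw [Commute, SemiconjBy, ← translate_add, ← translate_add, add_comm]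

section Displacement

variable (g : Lp ℝ 2 P)

theorem norm_sub_translate_add_le (x y : V d) :
    ‖g - translate hθ (x + y) g‖ ≤ ‖g - translate hθ x g‖ + ‖g - translate hθ y g‖ := by
  have hsplit : g - translate hθ (x + y) g
      = (g - translate hθ x g) + translate hθ x (g - translate hθ y g) := by
    rw [translate_add, mul_apply_eq_comp, map_sub]
    abel
  rw [hsplit, ← norm_translate hθ x (g - translate hθ y g)]
  exact norm_add_le _ _

theorem norm_sub_translate_neg (x : V d) :
    ‖g - translate hθ (-x) g‖ = ‖g - translate hθ x g‖ := by
  rw [← norm_translate hθ x, map_sub, ← mul_apply_eq_comp, ← translate_add, add_neg_cancel,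
    translate_zero, one_apply_eq_self, norm_sub_rev]

theorem norm_sub_translate_nsmul_le (n : ℕ) (x : V d) :
    ‖g - translate hθ (n • x) g‖ ≤ n * ‖g - translate hθ x g‖ := by
  induction n with
  | zero => simp [translate_zero]
  | succ n ih =>
    rw [succ_nsmul, Nat.cast_succ, add_one_mul]
    exact (norm_sub_translate_add_le hθ g _ x).trans (by gcongr)

theorem norm_sub_translate_zsmul_le (k : ℤ) (x : V d) :
    ‖g - translate hθ (k • x) g‖ ≤ |(k : ℝ)| * ‖g - translate hθ x g‖ := by
  obtain ⟨n, rfl | rfl⟩ := Int.eq_nat_or_neg k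
  · simpa using norm_sub_translate_nsmul_le hθ g n x
  · simpa [neg_zsmul, norm_sub_translate_neg] using norm_sub_translate_nsmul_le hθ g n x

theorem norm_sub_translate_le_sum (x : V d) :
    ‖g - translate hθ x g‖ ≤ ∑ i, |(x i : ℝ)| * ‖g - translate hθ (Pi.single i 1) g‖ := by
  conv_lhs => rw [pi_eq_sum_univ' x]
  refine (Finset.le_sum_of_subadditive (fun y => ‖g - translate hθ y g‖)
    (by simp [translate_zero]) (norm_sub_translate_add_le hθ g) _ _).trans ?_
  exact Finset.sum_le_sum fun i _ => norm_sub_translate_zsmul_le hθ g (x i) _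

theorem sq_norm_sub_translate_le (x : V d) :
    ‖g - translate hθ x g‖ ^ 2
      ≤ (∑ i, (x i : ℝ) ^ 2) * ∑ i, ‖g - translate hθ (Pi.single i 1) g‖ ^ 2 := by
  calc ‖g - translate hθ x g‖ ^ 2
      ≤ (∑ i, |(x i : ℝ)| * ‖g - translate hθ (Pi.single i 1) g‖) ^ 2 := by
        gcongr
        exact norm_sub_translate_le_sum hθ g x
    _ ≤ _ := by
        simpa using Finset.sum_mul_sq_le_sq_mul_sq Finset.univ (fun i => abs (x i : ℝ))
          (fun i => ‖g - translate hθ (Pi.single i 1) g‖)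

theorem sum_sq_norm_sub_translate_dir :
    ∑ p : Fin d × Bool, ‖g - translate hθ (dir p) g‖ ^ 2
      = 2 * ∑ i, ‖g - translate hθ (Pi.single i 1) g‖ ^ 2 := by
  rw [Fintype.sum_prod_type, Finset.mul_sum]
  refine Finset.sum_congr rfl fun i _ => ?_
  simp [dir, norm_sub_translate_neg]
  ring

theorem inner_sub_translate_self (x : V d) :
    ⟪g - translate hθ x g, g⟫ = ‖g - translate hθ x g‖ ^ 2 / 2 := by
  rw [norm_sub_sq_real, norm_translate, inner_sub_left, real_inner_self_eq_norm_sq,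
    real_inner_comm]
  ring

end Displacement

noncomputable def generator : Lp ℝ 2 P →L[ℝ] Lp ℝ 2 P :=
  ∑ p : Fin d × Bool, (translate hθ (dir p) - 1)

theorem eq_generator_of_ae {L : Lp ℝ 2 P →L[ℝ] Lp ℝ 2 P}
    (hL : ∀ g : Lp ℝ 2 P, L g =ᵐ[P] fun ω => ∑ p : Fin d × Bool, (g (theta (dir p) ω) - g ω)) :
    L = generator hθ := by
  ext1 g
  have hterm : ∀ᵐ ω ∂P, ∀ p : Fin d × Bool,
      (translate hθ (dir p) g - g) ω = g (theta (dir p) ω) - g ω :=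
    ae_all_iff.2 fun p => by
      filter_upwards [Lp.coeFn_sub (translate hθ (dir p) g) g,
        coeFn_translate hθ (dir p) g] with ω h₁ h₂
      rw [h₁, Pi.sub_apply, h₂]
  refine Lp.ext ?_
  filter_upwards [hL g, Lp.coeFn_fun_finsetSum Finset.univ
    fun p : Fin d × Bool => translate hθ (dir p) g - g, hterm] with ω h₁ h₂ h₃
  simp only [generator, sum_apply, sub_apply, one_apply_eq_self, h₁, h₂, h₃]

theorem inner_generator_self (g : Lp ℝ 2 P) :
    ⟪generator hθ g, g⟫ = -∑ i, ‖g - translate hθ (Pi.single i 1) g‖ ^ 2 := by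
  have hterm : ∀ p : Fin d × Bool,
      ⟪(translate hθ (dir p) - 1) g, g⟫ = -(‖g - translate hθ (dir p) g‖ ^ 2 / 2) := by
    intro p
    rw [← inner_sub_translate_self, ← inner_neg_left, sub_apply, one_apply_eq_self, neg_sub]
  simp only [generator, sum_apply, sum_inner, hterm, Finset.sum_neg_distrib,
    ← Finset.sum_div, sum_sq_norm_sub_translate_dir]
  ring

theorem inner_generator_self_nonpos (g : Lp ℝ 2 P) : ⟪generator hθ g, g⟫ ≤ 0 := by
  rw [inner_generator_self, neg_nonpos]
  positivity

theorem commute_generator_translate (x : V d) : Commute (generator hθ) (translate hθ x) :=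
  .sum_left _ _ _ fun p _ => (commute_translate hθ (dir p) x).sub_left (.one_left _)

noncomputable def boxSum (n : ℕ) : Lp ℝ 2 P →L[ℝ] Lp ℝ 2 P :=
  ∑ x ∈ box d n, translate hθ x

theorem commute_exp_generator_boxSum (t : ℝ) (n : ℕ) :
    Commute (NormedSpace.exp (t • generator hθ)) (boxSum hθ n) :=
  .sum_right _ _ _ fun x _ => ((commute_generator_translate hθ x).smul_left t).exp_left

theorem sq_norm_boxSum_toLp {f : Env d → ℝ} (hf : MemLp f 2 P) (n : ℕ) :
    ‖boxSum hθ n (hf.toLp f)‖ ^ 2 = ∫ ω, Sfun d n f ω ^ 2 ∂P := by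
  have hterm : ∀ᵐ ω ∂P, ∀ x ∈ box d n, translate hθ x (hf.toLp f) ω = f (theta x ω) :=
    (Filter.eventually_all_finset _).2 fun x _ =>
      (coeFn_translate hθ x _).trans ((hθ x).quasiMeasurePreserving.ae_eq_comp hf.coeFn_toLp)
  rw [← real_inner_self_eq_norm_sq, L2.inner_def]
  refine integral_congr_ae ?_
  filter_upwards [Lp.coeFn_fun_finsetSum (box d n) fun x => translate hθ x (hf.toLp f),
    hterm] with ω h₁ h₂
  rw [boxSum, sum_apply, h₁, Sfun, Finset.sum_congr rfl h₂]
  simp [sq]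

theorem card_box_mul_sq_norm_le (g : Lp ℝ 2 P) (n : ℕ) :
    (box d n).card * ‖g‖ ^ 2
      ≤ ⟪boxSum hθ n g, g⟫ + (box d n).card * (d * n ^ 2 / 2 * -⟪generator hθ g, g⟫) := by
  have hsplit : (box d n).card * ‖g‖ ^ 2
      = ⟪boxSum hθ n g, g⟫ + ∑ x ∈ box d n, ⟪g - translate hθ x g, g⟫ := by
    rw [boxSum, sum_apply, sum_inner, ← Finset.sum_add_distrib]
    simp only [← inner_add_left, add_sub_cancel, real_inner_self_eq_norm_sq, Finset.sum_const,
      nsmul_eq_mul]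
  have hterm : ∀ x ∈ box d n,
      ⟪g - translate hθ x g, g⟫ ≤ d * n ^ 2 / 2 * -⟪generator hθ g, g⟫ := by
    intro x hx
    rw [inner_sub_translate_self, inner_generator_self, neg_neg, div_mul_eq_mul_div]
    gcongr
    calc ‖g - translate hθ x g‖ ^ 2
        ≤ (∑ i, (x i : ℝ) ^ 2) * ∑ i, ‖g - translate hθ (Pi.single i 1) g‖ ^ 2 :=
          sq_norm_sub_translate_le hθ g x
      _ ≤ _ := by gcongr; exact sum_sq_le_of_mem_box hx
  rw [hsplit]
  gcongr
  simpa using Finset.sum_le_card_nsmul _ _ _ hterm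

theorem nash_inequality (g : Lp ℝ 2 P) (n : ℕ) {N : ℝ}
    (hS : ‖boxSum hθ n g‖ ^ 2 ≤ N * (box d n).card) :
    d * n ^ 2 * ⟪generator hθ g, g⟫ + ‖g‖ ^ 2 ≤ N / (2 * n + 1) ^ d := by
  have hcard : ((box d n).card : ℝ) = (2 * n + 1) ^ d := by rw [card_box]; push_cast; ring
  have hm : (0 : ℝ) < (2 * n + 1) ^ d := by positivity
  have hbox := card_box_mul_sq_norm_le hθ g n
  rw [hcard] at hbox hS
  have hCS := real_inner_le_norm (boxSum hθ n g) g
  have hAMGM : 2 * (2 * n + 1) ^ d * (‖boxSum hθ n g‖ * ‖g‖)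
      ≤ N * (2 * n + 1) ^ d + ((2 * n + 1) ^ d) ^ 2 * ‖g‖ ^ 2 := by
    nlinarith [sq_nonneg (‖boxSum hθ n g‖ - (2 * n + 1) ^ d * ‖g‖)]
  rw [le_div_iff₀ hm]
  nlinarith

end Translation

/-- **Variance decay for the simple random walk.** For every `d ≥ 1` there is `C > 0`
(depending only on `d`) such that for every law `ℙ` as in the setting, every `f ∈ L²(ℙ)` with
`𝒩(f)` finite (i.e. `𝔼[S_n(f)²] ≤ Nf |B_n|` for all `n`, for some `Nf`) and every `t > 0`:
`𝔼[(exp(tL°) f)²] ≤ C 𝒩(f) / t^{d/2}`. -/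
theorem variance_decay_simple_rw :
    ∀ d : ℕ, 1 ≤ d → ∃ C : ℝ, 0 < C ∧
      ∀ (P : Measure (Env d)), IsProbabilityMeasure P →
        (∀ x : V d, MeasurePreserving (theta x) P P) →
        (∀ᵐ ω ∂P, ∀ e : Edge d, 1 ≤ ω e) →
        ∀ Lop : Lp ℝ 2 P →L[ℝ] Lp ℝ 2 P,
          (∀ g : Lp ℝ 2 P,
            (Lop g : Env d → ℝ) =ᵐ[P]
              fun ω => ∑ p : Fin d × Bool,
                ((g : Env d → ℝ) (theta (dir p) ω) - (g : Env d → ℝ) ω)) →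
          ∀ (f : Env d → ℝ) (hf : MemLp f 2 P) (Nf : ℝ),
            (∀ n : ℕ, ∫ ω, Sfun d n f ω ^ 2 ∂P ≤ Nf * ((box d n).card : ℝ)) →
            ∀ t : ℝ, 0 < t →
              ‖NormedSpace.exp (t • Lop) (hf.toLp f)‖ ^ 2 ≤
                C * Nf / t ^ ((d : ℝ) / 2) := by
  intro d hd
  refine ⟨2 * (2 * (d + 1) * ((d : ℝ) / 2)) ^ ((d : ℝ) / 2), by positivity, ?_⟩
  intro P _ hθ _ Lop hLop f hf Nf hN t ht
  obtain rfl := eq_generator_of_ae hθ hLop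
  refine le_div_rpow_of_nash_ineq (div_pos (Nat.cast_pos.2 hd) two_pos)
    (hasDerivAt_norm_sq_exp_smul_apply _ _) (fun _ => by positivity) (fun n s hs => ?_) ht
  have hS : ‖boxSum hθ n (NormedSpace.exp (s • generator hθ) (hf.toLp f))‖ ^ 2
      ≤ Nf * (box d n).card := by
    rw [← mul_apply_eq_comp, ← (commute_exp_generator_boxSum hθ s n).eq, mul_apply_eq_comp]
    grw [norm_exp_smul_apply_le (inner_generator_self_nonpos hθ) _ hs, sq_norm_boxSum_toLp]
    exact hN n
  linarith [nash_inequality hθ _ n hS]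

end RWRC
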